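/- Any guarded pre-iterative monad satisfying naturality, codiagonal, and uniformity also satisfies dinaturality: ([η∘inl, h]* ∘ g)† = [η, ([η∘inl, g]* ∘ h)†]* ∘ g, whenever either g : X → T(Y+Z) is inr-guarded and h : Z → T(Y+X) is arbitrary, or g : X → T(Y+Z) is arbitrary and h : Z → T(Y+X) is inr-guarded. -/

import Mathlib

open CategoryTheory CategoryTheory.Limits

universe v u

/-- `(σ, σ')` form a binary coproduct cospan, i.e. a summand together with its complement. -/
def IsCoprodCospan {C : Type u} [Category.{v} C] {Y' Y'' Y : C}
    (σ : Y' ⟶ Y) (σ' : Y'' ⟶ Y) : Prop :=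
  Nonempty (IsColimit (BinaryCofan.mk σ σ'))

/-- A monad on `C`, presented as a Kleisli triple. -/
structure KMonad (C : Type u) [Category.{v} C] where
  obj : C → C
  η : ∀ X : C, X ⟶ obj X
  bind : ∀ {X Y : C}, (X ⟶ obj Y) → (obj X ⟶ obj Y)
  η_bind : ∀ {X Y : C} (f : X ⟶ obj Y), η X ≫ bind f = f
  bind_η : ∀ X : C, bind (η X) = 𝟙 (obj X)
  bind_comp : ∀ {X Y Z : C} (f : X ⟶ obj Y) (g : Y ⟶ obj Z),
      bind (f ≫ bind g) = bind f ≫ bind g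

/-- An abstractly guarded monad: its Kleisli category carries a notion of abstract
guardedness, i.e. a relation `guarded f σ σ'` between Kleisli morphisms
`f : X ⟶ obj Y` and summands `σ : Y' ⟶ Y` (with chosen complement `σ' : Y'' ⟶ Y`)
closed under the rules (trv), (par) and (cmp), where the coproducts in the Kleisli
category are inherited from `C` (with injections `η ∘ inj`). -/
structure GMonad (C : Type u) [Category.{v} C] extends KMonad C where
  guarded : ∀ {X Y' Y'' Y : C}, (X ⟶ obj Y) → (Y' ⟶ Y) → (Y'' ⟶ Y) → Prop
  trv : ∀ {X Y Z P : C} (i₁ : Y ⟶ P) (i₂ : Z ⟶ P), IsCoprodCospan i₁ i₂ →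
      ∀ f : X ⟶ obj Y, guarded (f ≫ bind (i₁ ≫ η P)) i₂ i₁
  par : ∀ {X Y P Z' Z'' Z : C} (j₁ : X ⟶ P) (j₂ : Y ⟶ P), IsCoprodCospan j₁ j₂ →
      ∀ (σ : Z' ⟶ Z) (σ' : Z'' ⟶ Z) (u : P ⟶ obj Z),
      guarded (j₁ ≫ u) σ σ' → guarded (j₂ ≫ u) σ σ' → guarded u σ σ'
  cmp : ∀ {X Y Z P V' V'' V : C} (i₁ : Y ⟶ P) (i₂ : Z ⟶ P), IsCoprodCospan i₁ i₂ →
      ∀ (σ : V' ⟶ V) (σ' : V'' ⟶ V) (f : X ⟶ obj P) (u : P ⟶ obj V),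
      guarded f i₂ i₁ → guarded (i₁ ≫ u) σ σ' → guarded (f ≫ bind u) σ σ'

/-- A guarded pre-iterative monad: every `inr`-guarded `f : X ⟶ T(Y+X)` has a chosen
solution `iter f hf` satisfying the fixpoint identity `f† = [η, f†]* ∘ f`. -/
structure PIMonad (C : Type u) [Category.{v} C] [HasBinaryCoproducts C]
    extends GMonad C where
  iter : ∀ {X Y : C} (f : X ⟶ obj (Y ⨿ X)),
      guarded f (coprod.inr : X ⟶ Y ⨿ X) coprod.inl → (X ⟶ obj Y)
  iter_fixpoint : ∀ {X Y : C} (f : X ⟶ obj (Y ⨿ X))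
      (hf : guarded f (coprod.inr : X ⟶ Y ⨿ X) coprod.inl),
      iter f hf = f ≫ bind (coprod.desc (η Y) (iter f hf))

/-- A guarded iterative monad: solutions of `inr`-guarded morphisms are unique. -/
structure IMonad (C : Type u) [Category.{v} C] [HasBinaryCoproducts C]
    extends PIMonad C where
  iter_unique : ∀ {X Y : C} (f : X ⟶ obj (Y ⨿ X))
      (hf : guarded f (coprod.inr : X ⟶ Y ⨿ X) coprod.inl) (s : X ⟶ obj Y),
      s = f ≫ bind (coprod.desc (η Y) s) → s = iter f hf

/-- A monad morphism, in Kleisli-triple form. -/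
structure KMonadHom {C : Type u} [Category.{v} C] (T S : KMonad C) where
  app : ∀ X : C, T.obj X ⟶ S.obj X
  app_η : ∀ X : C, T.η X ≫ app X = S.η X
  app_bind : ∀ (X Y : C) (f : X ⟶ T.obj Y),
      T.bind f ≫ app Y = app X ≫ S.bind (f ≫ app Y)

/-- The naturality law of iteration:
`g* ∘ f† = ([T(inl) ∘ g, η ∘ inr]* ∘ f)†` for inr-guarded `f : X ⟶ T(Y+X)` and
`g : Y ⟶ T Z`. -/
def PIMonad.Naturality {C : Type u} [Category.{v} C] [HasBinaryCoproducts C]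
    (T : PIMonad C) : Prop :=
  ∀ (X Y Z : C) (f : X ⟶ T.obj (Y ⨿ X))
    (hf : T.guarded f (coprod.inr : X ⟶ Y ⨿ X) coprod.inl)
    (g : Y ⟶ T.obj Z)
    (h' : T.guarded
        (f ≫ T.bind (coprod.desc (g ≫ T.bind (coprod.inl ≫ T.η (Z ⨿ X)))
          (coprod.inr ≫ T.η (Z ⨿ X))))
        (coprod.inr : X ⟶ Z ⨿ X) coprod.inl),
    T.iter f hf ≫ T.bind g = T.iter _ h'

/-- The dinaturality law of iteration:
`([η ∘ inl, h]* ∘ g)† = [η, ([η ∘ inl, g]* ∘ h)†]* ∘ g`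
for `g : X ⟶ T(Y+Z)`, `h : Z ⟶ T(Y+X)` with `g` inr-guarded or `h` inr-guarded. -/
def PIMonad.Dinaturality {C : Type u} [Category.{v} C] [HasBinaryCoproducts C]
    (T : PIMonad C) : Prop :=
  ∀ (X Y Z : C) (g : X ⟶ T.obj (Y ⨿ Z)) (h : Z ⟶ T.obj (Y ⨿ X)),
    (T.guarded g (coprod.inr : Z ⟶ Y ⨿ Z) coprod.inl ∨
      T.guarded h (coprod.inr : X ⟶ Y ⨿ X) coprod.inl) →
    ∀ (hu : T.guarded (g ≫ T.bind (coprod.desc (coprod.inl ≫ T.η (Y ⨿ X)) h))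
        (coprod.inr : X ⟶ Y ⨿ X) coprod.inl)
      (hv : T.guarded (h ≫ T.bind (coprod.desc (coprod.inl ≫ T.η (Y ⨿ Z)) g))
        (coprod.inr : Z ⟶ Y ⨿ Z) coprod.inl),
    T.iter _ hu = g ≫ T.bind (coprod.desc (T.η Y) (T.iter _ hv))

/-- The codiagonal law of iteration: `(T[id, inr] ∘ f)† = f††` for
`f : X ⟶ T((Y+X)+X)` guarded in the summand `[inl ∘ inr, inr]`. -/
def PIMonad.Codiagonal {C : Type u} [Category.{v} C] [HasBinaryCoproducts C]
    (T : PIMonad C) : Prop :=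
  ∀ (X Y : C) (f : X ⟶ T.obj ((Y ⨿ X) ⨿ X))
    (_h12 : T.guarded f
        (coprod.desc (coprod.inr ≫ coprod.inl) coprod.inr : X ⨿ X ⟶ (Y ⨿ X) ⨿ X)
        (coprod.inl ≫ coprod.inl : Y ⟶ (Y ⨿ X) ⨿ X))
    (h1 : T.guarded f (coprod.inr : X ⟶ (Y ⨿ X) ⨿ X) coprod.inl)
    (h2 : T.guarded (T.iter f h1) (coprod.inr : X ⟶ Y ⨿ X) coprod.inl)
    (h3 : T.guarded (f ≫ T.bind (coprod.desc (𝟙 (Y ⨿ X)) coprod.inr ≫ T.η (Y ⨿ X)))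
        (coprod.inr : X ⟶ Y ⨿ X) coprod.inl),
    T.iter _ h3 = T.iter (T.iter f h1) h2

/-- The uniformity law of iteration: `f ∘ h = T(id + h) ∘ g` implies `f† ∘ h = g†`
for inr-guarded `f : X ⟶ T(Y+X)`, inr-guarded `g : Z ⟶ T(Y+Z)`, and `h : Z ⟶ X`. -/
def PIMonad.Uniformity {C : Type u} [Category.{v} C] [HasBinaryCoproducts C]
    (T : PIMonad C) : Prop :=
  ∀ (X Y Z : C) (f : X ⟶ T.obj (Y ⨿ X))
    (hf : T.guarded f (coprod.inr : X ⟶ Y ⨿ X) coprod.inl)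
    (g : Z ⟶ T.obj (Y ⨿ Z))
    (hg : T.guarded g (coprod.inr : Z ⟶ Y ⨿ Z) coprod.inl)
    (h : Z ⟶ X),
    h ≫ f = g ≫ T.bind (coprod.map (𝟙 Y) h ≫ T.η (Y ⨿ X)) →
    h ≫ T.iter f hf = T.iter g hg

/-!
Write `u = [η ∘ inl, h]* ∘ g` and `v = [η ∘ inl, g]* ∘ h`, and let `p² = [η ∘ inl, p]* ∘ p` be the
"two steps at once" square of a loop body. Codiagonal and uniformity give `(p²)† = p†`: iterating
`p` on two copies of the state space that swap at every step computes `p†`, and splitting that loop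
into an inner and an outer one via the codiagonal law computes `(p²)†`.

If `h` is guarded, the loop body `θ = [[η ∘ inl, (id + inr) ∘ v]* ∘ g, (id + inl) ∘ h]` on `X + Z`
is guarded, and its square restricts to `(id + inl) ∘ u²` on `X` and to `(id + inr) ∘ v²` on `Z`.
Uniformity and squaring then give `θ† ∘ inl = u†` and `θ† ∘ inr = v†`, and unfolding `θ†` once
on `X` yields `u† = [η, v†]* ∘ g`. The case of a guarded `g` follows by exchanging the roles of
`g` and `h` and unfolding `u†` once.
-/

section

attribute [local simp] coprod.inl_desc coprod.inr_desc coprod.inl_desc_assoc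
  coprod.inr_desc_assoc KMonad.η_bind KMonad.bind_η

section Coproducts

variable {C : Type u} [Category.{v} C] [HasBinaryCoproducts C]

lemma isCoprodCospan_inl_inr (A B : C) :
    IsCoprodCospan (coprod.inl : A ⟶ A ⨿ B) coprod.inr :=
  ⟨coprodIsCoprod A B⟩

lemma isCoprodCospan_inl_comp_inl (Y W : C) :
    IsCoprodCospan (coprod.inl ≫ coprod.inl : Y ⟶ (Y ⨿ W) ⨿ W)
      (coprod.desc (coprod.inr ≫ coprod.inl) coprod.inr) :=
  ⟨(coprodIsCoprod Y (W ⨿ W)).ofIsoColimit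
    (BinaryCofan.ext (coprod.associator Y W W).symm (coprod.inl_desc _ _) (coprod.inr_desc _ _))⟩

lemma coprod_map_id_eq_desc {A B B' : C} (k : B ⟶ B') :
    coprod.map (𝟙 A) k = coprod.desc coprod.inl (k ≫ coprod.inr) := by
  ext <;> simp

lemma coprod_desc_inl_comp_inr_comp {A B V : C} (f : A ⨿ B ⟶ V) :
    coprod.desc (coprod.inl ≫ f) (coprod.inr ≫ f) = f := by
  ext <;> simp

end Coproducts

namespace KMonad

variable {C : Type u} [Category.{v} C] (T : KMonad C)

@[simp]
lemma bind_comp_bind {X Y Z : C} (f : X ⟶ T.obj Y) (g : Y ⟶ T.obj Z) :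
    T.bind f ≫ T.bind g = T.bind (f ≫ T.bind g) :=
  (T.bind_comp f g).symm

variable [HasBinaryCoproducts C]

/-- The Kleisli copairing `[η ∘ inl, k]`. -/
noncomputable def descInl {Y A B : C} (k : A ⟶ T.obj (Y ⨿ B)) : Y ⨿ A ⟶ T.obj (Y ⨿ B) :=
  coprod.desc (coprod.inl ≫ T.η (Y ⨿ B)) k

/-- Two steps of the loop body `p` at once. -/
noncomputable def sq {X Y : C} (p : X ⟶ T.obj (Y ⨿ X)) : X ⟶ T.obj (Y ⨿ X) :=
  p ≫ T.bind (T.descInl p)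

/-- The loop body `p` run on two copies of its state space, switching copy at every step. -/
noncomputable def alternate {X Y : C} (p : X ⟶ T.obj (Y ⨿ X)) : X ⨿ X ⟶ T.obj (Y ⨿ (X ⨿ X)) :=
  coprod.desc (p ≫ T.bind (coprod.map (𝟙 Y) coprod.inr ≫ T.η (Y ⨿ (X ⨿ X))))
    (p ≫ T.bind (coprod.map (𝟙 Y) coprod.inl ≫ T.η (Y ⨿ (X ⨿ X))))

end KMonad

attribute [local simp] coprod_map_id_eq_desc coprod_desc_inl_comp_inr_comp KMonad.descInl KMonad.sq

namespace GMonad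

variable {C : Type u} [Category.{v} C] (T : GMonad C)

lemma guarded_pure {X Y' Y'' P : C} {σ : Y' ⟶ P} {σ' : Y'' ⟶ P}
    (hσ : IsCoprodCospan σ' σ) (a : X ⟶ Y'') : T.guarded (a ≫ σ' ≫ T.η P) σ σ' := by
  simpa using T.trv σ' σ hσ (a ≫ T.η Y'')

variable [HasBinaryCoproducts C]

lemma guarded_desc {A B Y' Y'' P : C} {σ : Y' ⟶ P} {σ' : Y'' ⟶ P}
    {a : A ⟶ T.obj P} {b : B ⟶ T.obj P} (ha : T.guarded a σ σ') (hb : T.guarded b σ σ') :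
    T.guarded (coprod.desc a b) σ σ' :=
  T.par coprod.inl coprod.inr (isCoprodCospan_inl_inr A B) σ σ' _
    (by rwa [coprod.inl_desc]) (by rwa [coprod.inr_desc])

lemma guarded_comp_bind {X P Q V' V'' V : C} {σ : V' ⟶ V} {σ' : V'' ⟶ V}
    {f : X ⟶ T.obj (P ⨿ Q)} (hf : T.guarded f (coprod.inr : Q ⟶ P ⨿ Q) coprod.inl)
    {k : P ⨿ Q ⟶ T.obj V} (hk : T.guarded (coprod.inl ≫ k) σ σ') :
    T.guarded (f ≫ T.bind k) σ σ' :=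
  T.cmp coprod.inl coprod.inr (isCoprodCospan_inl_inr P Q) σ σ' f k hf hk

lemma guarded_comp_bind_of_guarded {X P V' V'' V : C} {σ : V' ⟶ V} {σ' : V'' ⟶ V}
    (f : X ⟶ T.obj P) {w : P ⟶ T.obj V} (hw : T.guarded w σ σ') :
    T.guarded (f ≫ T.bind w) σ σ' := by
  have hf := T.trv coprod.inl coprod.inr (isCoprodCospan_inl_inr P P) f
  have := T.guarded_comp_bind hf (k := coprod.desc w w) (by rwa [coprod.inl_desc])
  simpa using this

lemma guarded_comp_descInl {X Y A B : C} {f : X ⟶ T.obj (Y ⨿ A)}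
    (hf : T.guarded f (coprod.inr : A ⟶ Y ⨿ A) coprod.inl) (k : A ⟶ T.obj (Y ⨿ B)) :
    T.guarded (f ≫ T.bind (T.descInl k)) (coprod.inr : B ⟶ Y ⨿ B) coprod.inl :=
  T.guarded_comp_bind hf (by
    simpa using T.guarded_pure (isCoprodCospan_inl_inr Y B) (𝟙 Y))

lemma guarded_comp_map {X Y A B : C} {f : X ⟶ T.obj (Y ⨿ A)}
    (hf : T.guarded f (coprod.inr : A ⟶ Y ⨿ A) coprod.inl) (k : A ⟶ B) :
    T.guarded (f ≫ T.bind (coprod.map (𝟙 Y) k ≫ T.η (Y ⨿ B)))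
      (coprod.inr : B ⟶ Y ⨿ B) coprod.inl :=
  T.guarded_comp_bind hf (by
    simpa using T.guarded_pure (isCoprodCospan_inl_inr Y B) (𝟙 Y))

lemma guarded_descInl {Y A B : C} {k : A ⟶ T.obj (Y ⨿ B)}
    (hk : T.guarded k (coprod.inr : B ⟶ Y ⨿ B) coprod.inl) :
    T.guarded (T.descInl k) (coprod.inr : B ⟶ Y ⨿ B) coprod.inl :=
  T.guarded_desc (by simpa using T.guarded_pure (isCoprodCospan_inl_inr Y B) (𝟙 Y)) hk

lemma guarded_sq {X Y : C} {p : X ⟶ T.obj (Y ⨿ X)}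
    (hp : T.guarded p (coprod.inr : X ⟶ Y ⨿ X) coprod.inl) :
    T.guarded (T.sq p) (coprod.inr : X ⟶ Y ⨿ X) coprod.inl :=
  T.guarded_comp_descInl hp p

lemma guarded_alternate {X Y : C} {p : X ⟶ T.obj (Y ⨿ X)}
    (hp : T.guarded p (coprod.inr : X ⟶ Y ⨿ X) coprod.inl) :
    T.guarded (T.alternate p) (coprod.inr : X ⨿ X ⟶ Y ⨿ (X ⨿ X)) coprod.inl :=
  T.guarded_desc (T.guarded_comp_map hp _) (T.guarded_comp_map hp _)

end GMonad

namespace PIMonad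

variable {C : Type u} [Category.{v} C] [HasBinaryCoproducts C] (T : PIMonad C)

lemma iter_eq_iter_of_codiagonal (hcod : T.Codiagonal) {X Y : C}
    {f : X ⟶ T.obj ((Y ⨿ X) ⨿ X)}
    (h₁₂ : T.guarded f (coprod.desc (coprod.inr ≫ coprod.inl) coprod.inr)
      (coprod.inl ≫ coprod.inl : Y ⟶ (Y ⨿ X) ⨿ X))
    (h₁ : T.guarded f (coprod.inr : X ⟶ (Y ⨿ X) ⨿ X) coprod.inl)
    {d : X ⟶ T.obj (Y ⨿ X)} (hd : T.guarded d (coprod.inr : X ⟶ Y ⨿ X) coprod.inl)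
    (hfd : T.iter f h₁ = d)
    {e : X ⟶ T.obj (Y ⨿ X)} (he : T.guarded e (coprod.inr : X ⟶ Y ⨿ X) coprod.inl)
    (hfe : f ≫ T.bind (coprod.desc (𝟙 (Y ⨿ X)) coprod.inr ≫ T.η (Y ⨿ X)) = e) :
    T.iter e he = T.iter d hd := by
  subst hfd hfe
  exact hcod X Y f h₁₂ h₁ hd he

lemma iter_alternate (hunif : T.Uniformity) {X Y : C} {p : X ⟶ T.obj (Y ⨿ X)}
    (hp : T.guarded p (coprod.inr : X ⟶ Y ⨿ X) coprod.inl) :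
    coprod.inl ≫ T.iter (T.alternate p) (T.guarded_alternate hp) = T.iter p hp := by
  have h := hunif _ _ _ _ hp _ (T.guarded_alternate hp) (coprod.desc (𝟙 X) (𝟙 X))
    (by ext <;> simp [KMonad.alternate])
  rw [← h, coprod.inl_desc_assoc, Category.id_comp]

lemma iter_sq_eq_inl_comp_iter_alternate (hcod : T.Codiagonal) (hunif : T.Uniformity) {X Y : C}
    {p : X ⟶ T.obj (Y ⨿ X)} (hp : T.guarded p (coprod.inr : X ⟶ Y ⨿ X) coprod.inl) :
    T.iter (T.sq p) (T.guarded_sq hp) =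
      coprod.inl ≫ T.iter (T.alternate p) (T.guarded_alternate hp) := by
  -- `alternate p` with the switch from the second copy back to the first made by an outer loop,
  -- so that the inner loop runs two steps of `p` from the first copy
  set nested : X ⨿ X ⟶ T.obj ((Y ⨿ (X ⨿ X)) ⨿ (X ⨿ X)) := coprod.desc
    (p ≫ T.bind (coprod.desc (coprod.inl ≫ coprod.inl ≫ T.η _) (coprod.inr ≫ coprod.inr ≫ T.η _)))
    (p ≫ T.bind (coprod.desc (coprod.inl ≫ coprod.inl ≫ T.η _)
      (coprod.inl ≫ coprod.inr ≫ coprod.inl ≫ T.η _))) with nested_def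
  have h_nested : T.guarded nested coprod.inr coprod.inl := by
    refine T.guarded_desc (T.guarded_comp_bind hp ?_) (T.guarded_comp_bind hp ?_) <;>
      simpa using T.guarded_pure (isCoprodCospan_inl_inr _ _) coprod.inl
  have h_nested' : T.guarded nested (coprod.desc (coprod.inr ≫ coprod.inl) coprod.inr)
      (coprod.inl ≫ coprod.inl : Y ⟶ (Y ⨿ (X ⨿ X)) ⨿ (X ⨿ X)) := by
    refine T.guarded_desc (T.guarded_comp_bind hp ?_) (T.guarded_comp_bind hp ?_) <;>
      simpa using T.guarded_pure (isCoprodCospan_inl_comp_inl _ _) (𝟙 Y)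
  set inner := coprod.desc (T.sq p ≫ T.bind (coprod.map (𝟙 Y) coprod.inl ≫ T.η (Y ⨿ (X ⨿ X))))
    (p ≫ T.bind (coprod.map (𝟙 Y) coprod.inl ≫ T.η _)) with inner_def
  have h_inner : T.guarded inner coprod.inr coprod.inl :=
    T.guarded_desc (T.guarded_comp_map (T.guarded_sq hp) _) (T.guarded_comp_map hp _)
  have iter_nested : T.iter nested h_nested = inner := by
    have fix := T.iter_fixpoint nested h_nested
    generalize T.iter nested h_nested = s at fix ⊢
    have inr_s : coprod.inr ≫ s = p ≫ T.bind (coprod.map (𝟙 Y) coprod.inl ≫ T.η _) := by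
      rw [fix]; simp [nested_def]
    ext
    · rw [fix]; simp [nested_def, inner_def, inr_s]
    · rw [inr_s]; simp [inner_def]
  have fold_nested :
      nested ≫ T.bind (coprod.desc (𝟙 _) coprod.inr ≫ T.η _) = T.alternate p := by
    simp [nested_def, KMonad.alternate]
  have unif_inner : coprod.inl ≫ T.iter inner h_inner = T.iter (T.sq p) (T.guarded_sq hp) :=
    hunif _ _ _ _ h_inner _ _ _ (by simp [inner_def])
  rw [← unif_inner, T.iter_eq_iter_of_codiagonal hcod h_nested' h_nested h_inner iter_nested
    (T.guarded_alternate hp) fold_nested]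

theorem iter_sq (hcod : T.Codiagonal) (hunif : T.Uniformity) {X Y : C}
    {p : X ⟶ T.obj (Y ⨿ X)} (hp : T.guarded p (coprod.inr : X ⟶ Y ⨿ X) coprod.inl) :
    T.iter (T.sq p) (T.guarded_sq hp) = T.iter p hp := by
  rw [T.iter_sq_eq_inl_comp_iter_alternate hcod hunif hp, T.iter_alternate hunif hp]

theorem dinaturality_of_guarded_right (hcod : T.Codiagonal) (hunif : T.Uniformity) {X Y Z : C}
    (g : X ⟶ T.obj (Y ⨿ Z)) {h : Z ⟶ T.obj (Y ⨿ X)}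
    (hh : T.guarded h (coprod.inr : X ⟶ Y ⨿ X) coprod.inl)
    (hu : T.guarded (g ≫ T.bind (T.descInl h)) (coprod.inr : X ⟶ Y ⨿ X) coprod.inl)
    (hv : T.guarded (h ≫ T.bind (T.descInl g)) (coprod.inr : Z ⟶ Y ⨿ Z) coprod.inl) :
    T.iter _ hu = g ≫ T.bind (coprod.desc (T.η Y) (T.iter _ hv)) := by
  set u := g ≫ T.bind (T.descInl h) with u_def
  set v := h ≫ T.bind (T.descInl g) with v_def
  set θ : X ⨿ Z ⟶ T.obj (Y ⨿ (X ⨿ Z)) := coprod.desc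
    (g ≫ T.bind (T.descInl (v ≫ T.bind (coprod.map (𝟙 Y) coprod.inr ≫ T.η _))))
    (h ≫ T.bind (coprod.map (𝟙 Y) coprod.inl ≫ T.η _)) with θ_def
  have hθ : T.guarded θ coprod.inr coprod.inl :=
    T.guarded_desc (T.guarded_comp_bind_of_guarded g (T.guarded_descInl (T.guarded_comp_map hv _)))
      (T.guarded_comp_map hh _)
  have unif_u : coprod.inl ≫ T.iter (T.sq θ) (T.guarded_sq hθ) =
      T.iter (T.sq u) (T.guarded_sq hu) :=
    hunif _ _ _ _ _ _ _ _ (by simp [θ_def, u_def, v_def])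
  have unif_v : coprod.inr ≫ T.iter (T.sq θ) (T.guarded_sq hθ) =
      T.iter (T.sq v) (T.guarded_sq hv) :=
    hunif _ _ _ _ _ _ _ _ (by simp [θ_def, v_def])
  have inr_iter : coprod.inr ≫ T.iter θ hθ = T.iter v hv := by
    rw [← T.iter_sq hcod hunif hθ, unif_v, T.iter_sq hcod hunif hv]
  have unfold : ∀ t, coprod.inl ≫ θ ≫ T.bind (coprod.desc (T.η Y) t) =
      g ≫ T.bind (coprod.desc (T.η Y) (v ≫ T.bind (coprod.desc (T.η Y) (coprod.inr ≫ t)))) := by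
    intro t; simp [θ_def]
  calc T.iter u hu = T.iter (T.sq u) (T.guarded_sq hu) := (T.iter_sq hcod hunif hu).symm
    _ = coprod.inl ≫ T.iter θ hθ := by rw [← unif_u, T.iter_sq hcod hunif hθ]
    _ = g ≫ T.bind (coprod.desc (T.η Y)
          (v ≫ T.bind (coprod.desc (T.η Y) (coprod.inr ≫ T.iter θ hθ)))) :=
      (congrArg (coprod.inl ≫ ·) (T.iter_fixpoint θ hθ)).trans (unfold _)
    _ = g ≫ T.bind (coprod.desc (T.η Y) (T.iter v hv)) := by
      rw [inr_iter, ← T.iter_fixpoint]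

theorem dinaturality_of_guarded_left (hcod : T.Codiagonal) (hunif : T.Uniformity) {X Y Z : C}
    {g : X ⟶ T.obj (Y ⨿ Z)} (hg : T.guarded g (coprod.inr : Z ⟶ Y ⨿ Z) coprod.inl)
    (h : Z ⟶ T.obj (Y ⨿ X))
    (hu : T.guarded (g ≫ T.bind (T.descInl h)) (coprod.inr : X ⟶ Y ⨿ X) coprod.inl)
    (hv : T.guarded (h ≫ T.bind (T.descInl g)) (coprod.inr : Z ⟶ Y ⨿ Z) coprod.inl) :
    T.iter _ hu = g ≫ T.bind (coprod.desc (T.η Y) (T.iter _ hv)) := by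
  conv_lhs => rw [T.iter_fixpoint]
  rw [T.dinaturality_of_guarded_right hcod hunif h hg hv hu]
  simp

end PIMonad

end

theorem dinaturality_derivable {C : Type u} [Category.{v} C] [HasBinaryCoproducts C]
    (T : PIMonad C) (hcod : T.Codiagonal)
    (hunif : T.Uniformity) : T.Dinaturality := by
  rintro X Y Z g h (hg | hh) hu hv
  · exact T.dinaturality_of_guarded_left hcod hunif hg h hu hv
  · exact T.dinaturality_of_guarded_right hcod hunif g hh hu hv
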